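/- arXiv:2605.09489 — 2 statements merged into one kernel-verified Lean document; each statement's English description precedes it below -/
import Mathlib

section
/- For odd m and any b : Σ^{n-1} → {0,1}, the sign of the successor permutation f_S = A_b ∘ σ equals the sign of the cyclic shift σ on Σ^n, independently of b. -/
/-- The cyclic left shift on `Fin n → α`: `(x_1,…,x_n) ↦ (x_2,…,x_n,x_1)`. -/
def cycShift {α : Type*} {n : ℕ} (x : Fin n → α) : Fin n → α :=
  fun i => if h : (i : ℕ) + 1 < n then x ⟨(i : ℕ) + 1, h⟩
           else x ⟨0, Nat.lt_of_le_of_lt (Nat.zero_le _) i.isLt⟩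

/-- The suffix `(x_2,…,x_n)` of `x = (x_1,…,x_n)`. -/
def sfx {m n : ℕ} (x : Fin n → ZMod m) : Fin (n - 1) → ZMod m :=
  fun j => x ⟨(j : ℕ) + 1, by have := j.isLt; omega⟩

/-- The successor map `f_S(x_1,…,x_n) = (x_2,…,x_n, x_1 + b(x_2,…,x_n))`. -/
def fS {m n : ℕ} (b : (Fin (n - 1) → ZMod m) → ZMod m) (x : Fin n → ZMod m) :
    Fin n → ZMod m :=
  fun i => if h : (i : ℕ) + 1 < n then x ⟨(i : ℕ) + 1, h⟩
           else x ⟨0, Nat.lt_of_le_of_lt (Nat.zero_le _) i.isLt⟩ + b (sfx x)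

/-! Write `x ∈ Σ^n` as `(x', x_n)` with `x' ∈ Σ^{n-1}`. Then `f_S = A ∘ σ`, where the shear
`A (x', x_n) = (x', x_n + b x')` translates each fibre `{x'} × Σ` by `b x'`. A translation of `Σ`
has order dividing the odd number `m`, so it is even, and hence so is `A`. -/

namespace Equiv.Perm

variable {α G : Type*} [Fintype α] [DecidableEq α] [AddGroup G] [Fintype G] [DecidableEq G]

theorem sign_eq_one_of_pow_eq_one {σ : Perm α} {k : ℕ} (hk : Odd k) (h : σ ^ k = 1) :
    sign σ = 1 := by
  simpa [Int.units_pow_eq_pow_mod_two, Nat.odd_iff.mp hk] using congrArg sign h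

theorem sign_addRight_of_odd_card (hG : Odd (Nat.card G)) (g : G) :
    sign (Equiv.addRight g) = 1 :=
  sign_eq_one_of_pow_eq_one hG (by rw [nsmul_addRight, card_nsmul_eq_zero', addRight_zero])

theorem sign_prodCongrLeft_addRight (hG : Odd (Nat.card G)) (c : α → G) :
    sign (prodCongrLeft fun a => Equiv.addRight (c a)) = 1 := by
  rw [sign_prodCongrLeft]
  exact Finset.prod_eq_one fun a _ => sign_addRight_of_odd_card hG (c a)

end Equiv.Perm

theorem sfx_eq_init_cycShift {m k : ℕ} (x : Fin (k + 1) → ZMod m) :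
    sfx x = Fin.init (cycShift x) := by
  funext j
  simp [sfx, cycShift, Fin.init]

theorem fS_eq_snoc {m k : ℕ} (b : (Fin (k + 1 - 1) → ZMod m) → ZMod m)
    (x : Fin (k + 1) → ZMod m) :
    fS b x = Fin.snoc (Fin.init (cycShift x))
      (cycShift x (Fin.last k) + b (Fin.init (cycShift x))) := by
  ext i
  induction i using Fin.lastCases with
  | last => simp [fS, cycShift, sfx_eq_init_cycShift]
  | cast j => simp [fS, cycShift, Fin.init]

theorem sign_fS_eq_sign_shift_general (m n : ℕ) [NeZero m] (hm : Odd m)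
    (b : (Fin (n - 1) → ZMod m) → ZMod m)
    (f s : Equiv.Perm (Fin n → ZMod m))
    (hf : ∀ x, f x = fS b x) (hs : ∀ x, s x = cycShift x) :
    Equiv.Perm.sign f = Equiv.Perm.sign s := by
  obtain _ | k := n
  · exact congrArg _ (Subsingleton.elim f s)
  have hfs : f = (Fin.snocEquiv fun _ => ZMod m).permCongr
      (Equiv.prodCongrLeft fun y : Fin k → ZMod m => Equiv.addRight (b y)) * s := by
    ext1 x
    rw [hf, fS_eq_snoc, Equiv.Perm.mul_apply, hs]
    rfl
  rw [hfs, Equiv.Perm.sign_mul, Equiv.Perm.sign_permCongr,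
    Equiv.Perm.sign_prodCongrLeft_addRight (by rwa [Nat.card_zmod]), one_mul]

/-- for odd `m` and any `b : Σ^{n-1} → {0,1}`, the sign of the
successor permutation `f_S` equals the sign of the cyclic shift `σ`,
independently of `b`. -/
theorem sign_fS_eq_sign_shift (m n : ℕ) [NeZero m] (hm : Odd m) (hn : 0 < n)
    (b : (Fin (n - 1) → ZMod m) → ZMod m) (hb : ∀ y, b y = 0 ∨ b y = 1)
    (f s : Equiv.Perm (Fin n → ZMod m))
    (hf : ∀ x, f x = fS b x) (hs : ∀ x, s x = cycShift x) :
    Equiv.Perm.sign f = Equiv.Perm.sign s :=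
  sign_fS_eq_sign_shift_general m n hm b f s hf hs
end

section
/- If m ≡ 3 (mod 4) and n is even, then the necklace count N(n,m) = (1/n)·Σ_{d|n} φ(d)·m^{n/d} is even. -/
open Finset MulAction
open scoped Nat

theorem Subgroup.pow_mem_iff_pow_gcd_mem {G : Type*} [Group G] {H : Subgroup G} {g : G} {n : ℕ}
    (hn : g ^ n = 1) (k : ℕ) : g ^ k ∈ H ↔ g ^ n.gcd k ∈ H := by
  refine ⟨fun hk => ?_, fun hgcd => ?_⟩
  · have hbezout : g ^ n.gcd k = (g ^ k) ^ n.gcdB k := by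
      rw [← zpow_natCast, Nat.gcd_eq_gcd_ab, zpow_add, zpow_mul, zpow_mul, zpow_natCast,
        zpow_natCast, hn, one_zpow, one_mul]
    rw [hbezout]
    exact H.zpow_mem hk _
  · have := H.pow_mem hgcd (k / n.gcd k)
    rwa [← pow_mul, Nat.mul_div_cancel' (Nat.gcd_dvd_right n k)] at this

namespace MulAction

variable {G X : Type*} [Group G] [MulAction G X]

theorem fixedBy_pow_eq_fixedBy_pow_gcd {g : G} {n : ℕ} (hn : g ^ n = 1) (k : ℕ) :
    fixedBy X (g ^ k) = fixedBy X (g ^ n.gcd k) := by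
  ext x
  simp only [mem_fixedBy, ← mem_stabilizer_iff]
  exact Subgroup.pow_mem_iff_pow_gcd_mem hn k

theorem card_orbitRel_zpowers_mul_orderOf [Finite X] {g : G} (hg : IsOfFinOrder g) :
    Nat.card (orbitRel.Quotient (Subgroup.zpowers g) X) * orderOf g =
      ∑ k ∈ range (orderOf g), Nat.card (fixedBy X (g ^ k)) := by
  classical
  have := Fintype.ofFinite X
  have := Fintype.ofEquiv _ (finEquivZPowers hg)
  have := Fintype.ofFinite (orbitRel.Quotient (Subgroup.zpowers g) X)
  have burnside := sum_card_fixedBy_eq_card_orbits_mul_card_group (Subgroup.zpowers g) X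
  simp only [← Nat.card_eq_fintype_card, Nat.card_zpowers] at burnside
  rw [← burnside, ← (finEquivZPowers hg).sum_comp]
  exact Fin.sum_univ_eq_sum_range (fun k => Nat.card (fixedBy X (g ^ k))) _

end MulAction

theorem Nat.sum_range_comp_gcd (n : ℕ) (f : ℕ → ℕ) :
    ∑ k ∈ range n, f (n.gcd k) = ∑ d ∈ n.divisors, φ d * f (n / d) := by
  rcases n.eq_zero_or_pos with rfl | hn
  · simp
  rw [← sum_fiberwise_of_maps_to (t := n.divisors) (g := n.gcd)
    fun k _ => Nat.mem_divisors.2 ⟨Nat.gcd_dvd_left n k, hn.ne'⟩]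
  calc ∑ d ∈ n.divisors, ∑ k ∈ range n with n.gcd k = d, f (n.gcd k)
      = ∑ d ∈ n.divisors, φ (n / d) * f d := by
        refine sum_congr rfl fun d hd => ?_
        rw [sum_congr rfl fun k hk => congrArg f (mem_filter.1 hk).2, sum_const, smul_eq_mul,
          Nat.totient_div_of_dvd (Nat.dvd_of_mem_divisors hd)]
    _ = ∑ d ∈ n.divisors, φ d * f (n / d) := by
        rw [← Nat.sum_div_divisors n]
        refine sum_congr rfl fun d hd => ?_
        rw [Nat.div_div_self (Nat.dvd_of_mem_divisors hd) hn.ne']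

section Rotation

variable {α : Type*} {n : ℕ}

theorem cycShift_apply (x : Fin n → α) (i : Fin n) :
    cycShift x i = x ⟨(i + 1) % n, Nat.mod_lt _ i.pos⟩ := by
  unfold cycShift
  split_ifs with h
  · simp only [Nat.mod_eq_of_lt h]
  · simp only [show (i : ℕ) + 1 = n by omega, Nat.mod_self]

theorem cycShift_iterate_apply (k : ℕ) (x : Fin n → α) (i : Fin n) :
    cycShift^[k] x i = x ⟨(i + k) % n, Nat.mod_lt _ i.pos⟩ := by
  induction k generalizing x with
  | zero => simp only [Function.iterate_zero, id_eq, add_zero, Nat.mod_eq_of_lt i.isLt]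
  | succ k ih =>
    rw [Function.iterate_succ_apply, ih, cycShift_apply]
    simp only [Nat.mod_add_mod, add_assoc]

theorem cycShift_iterate_self (x : Fin n → α) : cycShift^[n] x = x := by
  ext i
  simp only [cycShift_iterate_apply, Nat.add_mod_right, Nat.mod_eq_of_lt i.isLt]

theorem exists_cycShift_iterate_ne [Nontrivial α] {k : ℕ} (hk : 0 < k) (hkn : k < n) :
    ∃ x : Fin n → α, cycShift^[k] x ≠ x := by
  classical
  obtain ⟨a, b, hab⟩ := exists_pair_ne α
  refine ⟨fun i => if (i : ℕ) = 0 then a else b, fun h => hab ?_⟩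
  have := congrFun h ⟨n - k, by omega⟩
  simpa [cycShift_iterate_apply, Nat.sub_add_cancel hkn.le, show n - k ≠ 0 by omega] using this

theorem apply_eq_apply_mod_of_cycShift_iterate_eq {g : ℕ} (hg : 0 < g) {x : Fin n → α}
    (hx : cycShift^[g] x = x) (i : Fin n) :
    x i = x ⟨i % g, (Nat.mod_le _ _).trans_lt i.isLt⟩ := by
  obtain ⟨i, hi⟩ := i
  induction i using Nat.strong_induction_on with
  | _ i ih =>
    rcases lt_or_ge i g with hig | hgi
    · simp only [Nat.mod_eq_of_lt hig]
    · have hstep := congrFun hx ⟨i - g, by omega⟩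
      simp only [cycShift_iterate_apply, Nat.sub_add_cancel hgi, Nat.mod_eq_of_lt hi] at hstep
      rw [hstep, ih (i - g) (by omega) (by omega)]
      simp only [← Nat.add_mod_right (i - g) g, Nat.sub_add_cancel hgi]

theorem card_cycShift_iterate_eq_self (hn : 0 < n) {g : ℕ} (hg : g ∣ n) :
    Nat.card {x : Fin n → α // cycShift^[g] x = x} = Nat.card α ^ g := by
  have hg0 : 0 < g := Nat.pos_of_dvd_of_pos hg hn
  have hgn : g ≤ n := Nat.le_of_dvd hn hg
  rw [show Nat.card α ^ g = Nat.card (Fin g → α) by rw [Nat.card_fun, Nat.card_fin]]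
  refine Nat.card_congr
    { toFun := fun x j => x.1 ⟨j, j.2.trans_le hgn⟩
      invFun := fun y => ⟨fun i => y ⟨i % g, Nat.mod_lt _ hg0⟩, ?_⟩
      left_inv := fun x => ?_
      right_inv := fun y => ?_ }
  · ext i
    simp only [cycShift_iterate_apply, Nat.mod_mod_of_dvd _ hg, Nat.add_mod_right]
  · ext i
    exact (apply_eq_apply_mod_of_cycShift_iterate_eq hg0 x.2 i).symm
  · ext j
    simp only [Nat.mod_eq_of_lt j.2]

variable {s : Equiv.Perm (Fin n → α)}

theorem coe_pow_eq_cycShift_iterate (hs : ∀ x, s x = cycShift x) (k : ℕ) :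
    ⇑(s ^ k) = cycShift^[k] := by
  rw [Equiv.Perm.coe_pow, funext hs]

theorem pow_eq_one_of_coe_eq_cycShift (hs : ∀ x, s x = cycShift x) : s ^ n = 1 :=
  Equiv.ext fun x => by rw [coe_pow_eq_cycShift_iterate hs, cycShift_iterate_self]; rfl

theorem orderOf_eq_of_coe_eq_cycShift [Nontrivial α] (hs : ∀ x, s x = cycShift x) (hn : 0 < n) :
    orderOf s = n := by
  refine (orderOf_eq_iff hn).2 ⟨pow_eq_one_of_coe_eq_cycShift hs, fun k hkn hk h => ?_⟩
  obtain ⟨x, hx⟩ := exists_cycShift_iterate_ne (α := α) hk hkn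
  rw [← coe_pow_eq_cycShift_iterate hs, h] at hx
  exact hx rfl

theorem card_fixedBy_pow_of_coe_eq_cycShift (hs : ∀ x, s x = cycShift x) (hn : 0 < n) (k : ℕ) :
    Nat.card (fixedBy (Fin n → α) (s ^ k)) = Nat.card α ^ n.gcd k := by
  rw [fixedBy_pow_eq_fixedBy_pow_gcd (pow_eq_one_of_coe_eq_cycShift hs),
    ← card_cycShift_iterate_eq_self hn (Nat.gcd_dvd_left n k)]
  refine Nat.card_congr (Equiv.subtypeEquivRight fun x => ?_)
  rw [mem_fixedBy, Equiv.Perm.smul_def, coe_pow_eq_cycShift_iterate hs]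

theorem card_orbitRel_zpowers_of_coe_eq_cycShift [Finite α] [Nontrivial α]
    (hs : ∀ x, s x = cycShift x) (hn : 0 < n) :
    n * Nat.card (orbitRel.Quotient (Subgroup.zpowers s) (Fin n → α)) =
      ∑ d ∈ n.divisors, φ d * Nat.card α ^ (n / d) := by
  have burnside := card_orbitRel_zpowers_mul_orderOf (X := Fin n → α) (isOfFinOrder_of_finite s)
  rw [orderOf_eq_of_coe_eq_cycShift hs hn] at burnside
  rw [mul_comm, burnside, ← Nat.sum_range_comp_gcd]
  exact sum_congr rfl fun k _ => card_fixedBy_pow_of_coe_eq_cycShift hs hn k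

end Rotation

theorem Int.two_pow_add_two_dvd_pow_two_pow_sub_one {x : ℤ} (hx : Odd x) {k : ℕ} (hk : 1 ≤ k) :
    2 ^ (k + 2) ∣ x ^ 2 ^ k - 1 := by
  induction k, hk using Nat.le_induction with
  | base => simpa using Int.eight_dvd_sq_sub_one_of_odd hx
  | succ k _ ih =>
    rw [show x ^ 2 ^ (k + 1) - 1 = (x ^ 2 ^ k - 1) * (x ^ 2 ^ k + 1) by ring, pow_succ]
    exact mul_dvd_mul ih hx.pow.add_one.two_dvd

theorem Nat.two_pow_dvd_two_mul_totient_two_pow (i : ℕ) : 2 ^ i ∣ 2 * φ (2 ^ i) := by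
  cases i with
  | zero => simp
  | succ i =>
    rw [Nat.totient_prime_pow_succ Nat.prime_two]
    simp [pow_succ, mul_comm]

theorem two_pow_add_two_dvd_totient_two_pow_mul_pow_two_pow_sub_one {x : ℤ} (hx : Odd x)
    {i b : ℕ} (hib : i ≤ b) : 2 ^ (b + 2) ∣ φ (2 ^ i) * (x ^ 2 ^ (b + 1 - i) - 1) := by
  have hpow := Int.two_pow_add_two_dvd_pow_two_pow_sub_one hx (k := b + 1 - i) (by omega)
  have htot : (2 : ℤ) ^ i ∣ 2 * φ (2 ^ i) := by
    exact_mod_cast Nat.two_pow_dvd_two_mul_totient_two_pow i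
  rw [← mul_dvd_mul_iff_left (two_ne_zero' ℤ), ← mul_assoc]
  calc (2 : ℤ) * 2 ^ (b + 2) = 2 ^ i * 2 ^ (b + 1 - i + 2) := by
        rw [← pow_succ', ← pow_add]
        congr 1
        omega
    _ ∣ _ := mul_dvd_mul htot hpow

theorem Nat.pow_mod_four_eq_three_of_odd {M c : ℕ} (hM : M % 4 = 3) (hc : Odd c) :
    M ^ c % 4 = 3 := by
  obtain ⟨t, rfl⟩ := hc
  rw [Nat.pow_mod, hM, pow_succ, pow_mul, Nat.mul_mod, Nat.pow_mod]
  norm_num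

theorem two_pow_add_two_dvd_sum_totient_mul_pow_div_two_pow {M : ℕ} (hM : M % 4 = 3) (b : ℕ) :
    2 ^ (b + 2) ∣ ∑ d ∈ (2 ^ (b + 1)).divisors, φ d * M ^ (2 ^ (b + 1) / d) := by
  have hodd : Odd (M : ℤ) := by
    rw [Int.odd_iff]
    omega
  have hterm : ∀ i ∈ range (b + 1),
      (2 : ℤ) ^ (b + 2) ∣ φ (2 ^ i) * ((M : ℤ) ^ (2 ^ (b + 1) / 2 ^ i) - 1) := fun i hi => by
    have hib : i ≤ b := Nat.lt_succ_iff.1 (mem_range.1 hi)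
    rw [Nat.pow_div (by omega) two_pos]
    exact two_pow_add_two_dvd_totient_two_pow_mul_pow_two_pow_sub_one hodd hib
  have hlast : (2 : ℤ) ^ (b + 2) ∣ 2 ^ b * (M + 1) := by
    rw [pow_add]
    exact mul_dvd_mul_left _ (by omega)
  have htotient : ∑ i ∈ range (b + 1), (φ (2 ^ i) : ℤ) = 2 ^ b := by
    exact_mod_cast (Nat.sum_divisors_prime_pow Nat.prime_two).symm.trans (Nat.sum_totient (2 ^ b))
  have hsplit : ∑ i ∈ range (b + 2), (φ (2 ^ i) : ℤ) * (M : ℤ) ^ (2 ^ (b + 1) / 2 ^ i) =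
      ∑ i ∈ range (b + 1), φ (2 ^ i) * ((M : ℤ) ^ (2 ^ (b + 1) / 2 ^ i) - 1) +
        2 ^ b * (M + 1) := by
    rw [sum_range_succ, Nat.div_self (by positivity), pow_one,
      Nat.totient_prime_pow_succ Nat.prime_two]
    push_cast
    simp only [mul_sub, mul_one, sum_sub_distrib, htotient]
    ring
  rw [← Int.natCast_dvd_natCast, Nat.sum_divisors_prime_pow Nat.prime_two]
  push_cast
  rw [hsplit]
  exact dvd_add (dvd_sum hterm) hlast

theorem Nat.Coprime.sum_totient_mul_pow_div_mul {u v : ℕ} (huv : u.Coprime v) (M : ℕ) :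
    ∑ d ∈ (u * v).divisors, φ d * M ^ (u * v / d) =
      ∑ e ∈ v.divisors, φ e * ∑ d ∈ u.divisors, φ d * (M ^ (v / e)) ^ (u / d) := by
  rw [Nat.divisors_mul, Finset.mul_def, sum_image huv.mul_injOn_divisors, sum_product_right]
  refine sum_congr rfl fun e he => ?_
  rw [mul_sum]
  refine sum_congr rfl fun d hd => ?_
  have hd := Nat.dvd_of_mem_divisors hd
  have he := Nat.dvd_of_mem_divisors he
  rw [Nat.totient_mul ((huv.coprime_dvd_left hd).coprime_dvd_right he),
    ← Nat.div_mul_div_comm hd he, mul_comm (u / d), pow_mul]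
  ring

theorem two_pow_succ_dvd_sum_totient_mul_pow_div {M : ℕ} (hM : M % 4 = 3) {a b : ℕ} (ha : 1 ≤ a)
    (hb : Odd b) : 2 ^ (a + 1) ∣ ∑ d ∈ (2 ^ a * b).divisors, φ d * M ^ (2 ^ a * b / d) := by
  obtain ⟨a, rfl⟩ := Nat.exists_eq_add_of_le' ha
  rw [(Nat.coprime_two_left.2 hb).pow_left _ |>.sum_totient_mul_pow_div_mul]
  refine dvd_sum fun e he => dvd_mul_of_dvd_right ?_ _
  exact two_pow_add_two_dvd_sum_totient_mul_pow_div_two_pow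
    (Nat.pow_mod_four_eq_three_of_odd hM (hb.of_dvd_nat (Nat.div_dvd_of_dvd
      (Nat.dvd_of_mem_divisors he)))) a

theorem necklace_count_even_general (m n : ℕ) (hm : m % 4 = 3) (hn : Even n) (hn0 : 0 < n)
    (A : Type) [Fintype A] (hA : Fintype.card A = m)
    (s : Equiv.Perm (Fin n → A)) (hs : ∀ x, s x = cycShift x) :
    n * Nat.card (MulAction.orbitRel.Quotient (Subgroup.zpowers s) (Fin n → A)) =
        ∑ d ∈ n.divisors, Nat.totient d * m ^ (n / d) ∧
    Even (Nat.card (MulAction.orbitRel.Quotient (Subgroup.zpowers s) (Fin n → A))) := by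
  have : Nontrivial A := Fintype.one_lt_card_iff_nontrivial.1 (by omega)
  have hcount := card_orbitRel_zpowers_of_coe_eq_cycShift hs hn0
  rw [Nat.card_eq_fintype_card (α := A), hA] at hcount
  refine ⟨hcount, ?_⟩
  obtain ⟨a, b, hb, rfl⟩ := Nat.exists_eq_two_pow_mul_odd hn0.ne'
  have ha : 1 ≤ a := by
    by_contra! ha
    simp only [Nat.lt_one_iff.1 ha, pow_zero, one_mul] at hn
    exact Nat.not_even_iff_odd.2 hb hn
  have hdvd := two_pow_succ_dvd_sum_totient_mul_pow_div hm ha hb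
  rw [← hcount, pow_succ, mul_assoc] at hdvd
  have hbN := Nat.dvd_of_mul_dvd_mul_left (by positivity) hdvd
  exact even_iff_two_dvd.2 ((Nat.prime_two.dvd_mul.1 hbN).resolve_left hb.not_two_dvd_nat)

/-- if `m ≡ 3 (mod 4)` and `n` is even, then the necklace count
`N(n,m)` — the number of orbits of cyclic rotation on `Σ^n`, which satisfies
`n·N(n,m) = Σ_{d∣n} φ(d)·m^{n/d}` — is even. -/
theorem necklace_count_even (m n : ℕ) (hm : m % 4 = 3) (hn : Even n) (hn0 : 0 < n)
    (A : Type) [Fintype A] [DecidableEq A] (hA : Fintype.card A = m)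
    (s : Equiv.Perm (Fin n → A)) (hs : ∀ x, s x = cycShift x) :
    n * Nat.card (MulAction.orbitRel.Quotient (Subgroup.zpowers s) (Fin n → A)) =
        ∑ d ∈ n.divisors, Nat.totient d * m ^ (n / d) ∧
    Even (Nat.card (MulAction.orbitRel.Quotient (Subgroup.zpowers s) (Fin n → A))) :=
  necklace_count_even_general m n hm hn hn0 A hA s hs
end
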